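/- Let G be a finite simple graph, R* a maximum matching of G, and M a maximal matching with M ≠ R*. Fix a linear order on E(G). Define par(M) = complete((M \ Γ(e)) ∪ {e}) where e is the minimum edge of R* \ M incident to an endpoint of a path component of G[M △ R*] if such exists, and otherwise the minimum edge of R* \ M. Then |par(M) ∩ R*| > |M ∩ R*| and |par(M)| ≥ min(|M|, ν(G) − 1). Consequently, iterating par from any maximal matching reaches R* in finitely many steps, i.e., par defines a tree rooted at R* on the maximal matchings. -/

import Mathlib

attribute [-instance] Sym2.instPartialOrder

open SimpleGraph

variable {V : Type*}

def IsMatchingF (G : SimpleGraph V) (M : Finset (Sym2 V)) : Prop :=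
  (∀ e ∈ M, e ∈ G.edgeSet) ∧
    ∀ e ∈ M, ∀ f ∈ M, e ≠ f → ∀ v : V, v ∈ e → v ∉ f

def IsMaximalMatchingF [DecidableEq V] (G : SimpleGraph V) (M : Finset (Sym2 V)) : Prop :=
  IsMatchingF G M ∧ ∀ e ∈ G.edgeSet, e ∉ M → ¬ IsMatchingF G (insert e M)

/-- `v` is unmatched by the matching `M`. -/
def Unmatched (M : Finset (Sym2 V)) (v : V) : Prop := ∀ e ∈ M, v ∉ e

/-- The graph `G[M₁ △ M₂]` on the symmetric difference of two edge sets. -/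
def sdGraph [DecidableEq V] (M₁ M₂ : Finset (Sym2 V)) : SimpleGraph V where
  Adj v w := v ≠ w ∧ s(v, w) ∈ (M₁ \ M₂) ∪ (M₂ \ M₁)
  symm := by
    refine ⟨fun v w h => ?_⟩
    exact ⟨h.1.symm, by rw [Sym2.eq_swap]; exact h.2⟩
  loopless := ⟨fun v h => h.1 rfl⟩

/-- The walk `p` is a path which is exactly a connected component of `H`
(it spans the component and uses all of its edges, and has at least one edge). -/
def IsPathComponent [DecidableEq V] (H : SimpleGraph V) {u w : V} (p : H.Walk u w) : Prop :=
  p.IsPath ∧ 1 ≤ p.length ∧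
    (∀ x : V, x ∈ p.support ↔ H.connectedComponentMk x = H.connectedComponentMk u) ∧
    (∀ a b : V, H.Adj a b → a ∈ p.support → s(a, b) ∈ p.edges)

/-- The closed walk `p` is a cycle which is exactly a connected component of `H`. -/
def IsCycleComponent [DecidableEq V] (H : SimpleGraph V) {u : V} (p : H.Walk u u) : Prop :=
  p.IsCycle ∧
    (∀ x : V, x ∈ p.support ↔ H.connectedComponentMk x = H.connectedComponentMk u) ∧
    (∀ a b : V, H.Adj a b → a ∈ p.support → s(a, b) ∈ p.edges)

/-- `M` minus all edges sharing an endpoint with `e` (i.e. `M \ Γ(e)` for `e ∉ M`). -/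
def removeAdj [Fintype V] [DecidableEq V] (M : Finset (Sym2 V)) (e : Sym2 V) :
    Finset (Sym2 V) :=
  M.filter fun f => ¬ ∃ v : V, v ∈ e ∧ v ∈ f

/-- `comp` greedily extends any matching of `G` to a maximal matching containing it. -/
def CompletionFun [DecidableEq V] (G : SimpleGraph V)
    (comp : Finset (Sym2 V) → Finset (Sym2 V)) : Prop :=
  ∀ M : Finset (Sym2 V), IsMatchingF G M → M ⊆ comp M ∧ IsMaximalMatchingF G (comp M)

/-- The arcs of the solution graph 𝒢: from `M` to `comp((M \ Γ(e)) ∪ {e})` for `e ∉ M`. -/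
def GStep [Fintype V] [DecidableEq V] (G : SimpleGraph V)
    (comp : Finset (Sym2 V) → Finset (Sym2 V)) (M M' : Finset (Sym2 V)) : Prop :=
  ∃ e ∈ G.edgeSet, e ∉ M ∧ M' = comp (insert e (removeAdj M e))

private lemma sym2_rep (e : Sym2 V) : ∃ a b : V, e = s(a, b) := by
  induction e using Sym2.ind with
  | _ a b => exact ⟨a, b, rfl⟩

theorem stmt18 [Fintype V] [DecidableEq V] [LinearOrder (Sym2 V)] (G : SimpleGraph V)
    (Rstar : Finset (Sym2 V))
    (hR : IsMatchingF G Rstar ∧ ∀ N : Finset (Sym2 V), IsMatchingF G N → N.card ≤ Rstar.card)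
    (comp : Finset (Sym2 V) → Finset (Sym2 V)) (hcomp : CompletionFun G comp)
    (par : Finset (Sym2 V) → Finset (Sym2 V))
    (hpar : ∀ M : Finset (Sym2 V), IsMaximalMatchingF G M → M ≠ Rstar →
      ∃ e ∈ Rstar \ M,
        -- `D` is the set of edges of `R* \ M` incident to an endpoint of a path
        -- component of `G[M △ R*]` (a vertex with exactly one neighbour there);
        -- `e` is the minimum edge of `D` if `D ≠ ∅`, else the minimum of `R* \ M`
        (let D : Set (Sym2 V) := {f | f ∈ Rstar \ M ∧
            ∃ v : V, v ∈ f ∧ (∃! w : V, (sdGraph M Rstar).Adj v w)};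
          (D.Nonempty → e ∈ D ∧ ∀ f ∈ D, e ≤ f) ∧
          (¬ D.Nonempty → ∀ f ∈ Rstar \ M, e ≤ f)) ∧
        par M = comp (insert e (removeAdj M e))) :
    (∀ M : Finset (Sym2 V), IsMaximalMatchingF G M → M ≠ Rstar →
        (M ∩ Rstar).card < (par M ∩ Rstar).card ∧
        min M.card (Rstar.card - 1) ≤ (par M).card) ∧
      (∀ M : Finset (Sym2 V), IsMaximalMatchingF G M → ∃ k : ℕ, par^[k] M = Rstar) := by
  classical
  obtain ⟨hRm, hRmax⟩ := hR
  have ends : ∀ {e : Sym2 V}, e ∈ G.edgeSet →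
      (Finset.univ.filter (fun v => v ∈ e)).card = 2 := by
    intro e he
    obtain ⟨a, b, rfl⟩ := sym2_rep e
    have hab : a ≠ b := (G.mem_edgeSet.mp he).ne
    have h2 : Finset.univ.filter (fun v => v ∈ s(a, b)) = {a, b} := by
      ext v; simp [Sym2.mem_iff]
    rw [h2, Finset.card_insert_of_notMem (by simp [hab]), Finset.card_singleton]
  have key : ∀ M : Finset (Sym2 V), IsMaximalMatchingF G M → M ≠ Rstar →
      (M ∩ Rstar).card < (par M ∩ Rstar).card ∧
      min M.card (Rstar.card - 1) ≤ (par M).card ∧ IsMaximalMatchingF G (par M) := by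
    intro M hM hne
    obtain ⟨e, heRM, hmin, hparEq⟩ := hpar M hM hne
    rw [Finset.mem_sdiff] at heRM
    obtain ⟨heR, heM⟩ := heRM
    have heG : e ∈ G.edgeSet := hRm.1 e heR
    set N := insert e (removeAdj M e) with hNdef
    have hrsub : removeAdj M e ⊆ M := Finset.filter_subset _ _
    have heRA : e ∉ removeAdj M e := fun h => heM (hrsub h)
    have hNm : IsMatchingF G N := by
      constructor
      · intro f hf
        rcases Finset.mem_insert.mp hf with rfl | hf
        · exact heG
        · exact hM.1.1 f (hrsub hf)
      · intro f hf g hg hfg v hvf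
        rcases Finset.mem_insert.mp hf with rfl | hf <;>
          rcases Finset.mem_insert.mp hg with rfl | hg
        · exact absurd rfl hfg
        · intro hvg
          exact (Finset.mem_filter.mp hg).2 ⟨v, hvf, hvg⟩
        · intro hvg
          exact (Finset.mem_filter.mp hf).2 ⟨v, hvg, hvf⟩
        · exact hM.1.2 f (hrsub hf) g (hrsub hg) hfg v hvf
    obtain ⟨hsubc, hmaxc⟩ := hcomp N hNm
    rw [← hparEq] at hsubc hmaxc
    have hinter : insert e (M ∩ Rstar) ⊆ par M ∩ Rstar := by
      intro f hf
      rcases Finset.mem_insert.mp hf with rfl | hf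
      · exact Finset.mem_inter.mpr ⟨hsubc (Finset.mem_insert_self _ _), heR⟩
      · rw [Finset.mem_inter] at hf
        have hfe : f ≠ e := fun h => heM (h ▸ hf.1)
        have hfra : f ∈ removeAdj M e := by
          refine Finset.mem_filter.mpr ⟨hf.1, ?_⟩
          rintro ⟨v, hve, hvf⟩
          exact hRm.2 e heR f hf.2 (Ne.symm hfe) v hve hvf
        exact Finset.mem_inter.mpr ⟨hsubc (Finset.mem_insert_of_mem hfra), hf.2⟩
    have hlt : (M ∩ Rstar).card < (par M ∩ Rstar).card := by
      have h := Finset.card_le_card hinter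
      rwa [Finset.card_insert_of_notMem (fun h => heM (Finset.mem_inter.mp h).1),
        Nat.add_one_le_iff] at h
    refine ⟨hlt, ?_, hmaxc⟩
    have hNcard : N.card = (removeAdj M e).card + 1 := Finset.card_insert_of_notMem heRA
    have hsplit : (removeAdj M e).card +
        (M.filter fun f => ∃ v : V, v ∈ e ∧ v ∈ f).card = M.card := by
      rw [add_comm]
      exact Finset.card_filter_add_card_filter_not _
    have hNpar : N.card ≤ (par M).card := Finset.card_le_card hsubc
    have h1e : ∀ x : V, (M.filter fun f => x ∈ f).card ≤ 1 := by
      intro x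
      refine Finset.card_le_one.mpr ?_
      intro f hf g hg
      obtain ⟨hfM, hxf⟩ := Finset.mem_filter.mp hf
      obtain ⟨hgM, hxg⟩ := Finset.mem_filter.mp hg
      by_contra hne'
      exact hM.1.2 f hfM g hgM hne' x hxf hxg
    have hrem2 : (M.filter fun f => ∃ v : V, v ∈ e ∧ v ∈ f).card ≤ 2 := by
      obtain ⟨a, b, hab⟩ := sym2_rep e
      have hsub2 : (M.filter fun f => ∃ v : V, v ∈ e ∧ v ∈ f) ⊆
          (M.filter fun f => a ∈ f) ∪ (M.filter fun f => b ∈ f) := by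
        intro f hf
        obtain ⟨hfM, v, hve, hvf⟩ := Finset.mem_filter.mp hf
        rw [hab, Sym2.mem_iff] at hve
        rcases hve with rfl | rfl
        · exact Finset.mem_union_left _ (Finset.mem_filter.mpr ⟨hfM, hvf⟩)
        · exact Finset.mem_union_right _ (Finset.mem_filter.mpr ⟨hfM, hvf⟩)
      calc (M.filter fun f => ∃ v : V, v ∈ e ∧ v ∈ f).card
          ≤ ((M.filter fun f => a ∈ f) ∪ (M.filter fun f => b ∈ f)).card :=
            Finset.card_le_card hsub2
        _ ≤ (M.filter fun f => a ∈ f).card + (M.filter fun f => b ∈ f).card :=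
            Finset.card_union_le _ _
        _ ≤ 2 := by have := h1e a; have := h1e b; omega
    obtain ⟨hDpos, hDneg⟩ := hmin
    by_cases hD : ({f | f ∈ Rstar \ M ∧
        ∃ v : V, v ∈ f ∧ (∃! w : V, (sdGraph M Rstar).Adj v w)} : Set (Sym2 V)).Nonempty
    · obtain ⟨⟨-, v, hve, w₀, hw₀, huniq⟩, -⟩ := hDpos hD
      have hvun : ∀ g ∈ M, v ∉ g := by
        intro g hgM hvg
        obtain ⟨u, hu⟩ := Sym2.mem_iff_exists.mp hve
        obtain ⟨x, hx⟩ := Sym2.mem_iff_exists.mp hvg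
        have hge : g ≠ e := fun h => heM (h ▸ hgM)
        have hvu : v ≠ u := (G.mem_edgeSet.mp (hu ▸ heG)).ne
        have hvx : v ≠ x := (G.mem_edgeSet.mp (hx ▸ (hM.1.1 g hgM))).ne
        have hAdju : (sdGraph M Rstar).Adj v u :=
          ⟨hvu, Finset.mem_union_right _ (Finset.mem_sdiff.mpr ⟨hu ▸ heR, hu ▸ heM⟩)⟩
        have hgR : g ∉ Rstar := by
          intro hgR
          exact hRm.2 e heR g hgR (Ne.symm hge) v hve hvg
        have hAdjx : (sdGraph M Rstar).Adj v x :=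
          ⟨hvx, Finset.mem_union_left _ (Finset.mem_sdiff.mpr ⟨hx ▸ hgM, hx ▸ hgR⟩)⟩
        have hux : u = x := (huniq u hAdju).trans (huniq x hAdjx).symm
        exact hge (by rw [hx, ← hux, ← hu])
      have hrem1 : (M.filter fun f => ∃ z : V, z ∈ e ∧ z ∈ f).card ≤ 1 := by
        obtain ⟨u, hu⟩ := Sym2.mem_iff_exists.mp hve
        refine Finset.card_le_one.mpr ?_
        intro f hf g hg
        obtain ⟨hfM, z, hze, hzf⟩ := Finset.mem_filter.mp hf
        obtain ⟨hgM, y, hye, hyg⟩ := Finset.mem_filter.mp hg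
        have hz : z = u := by
          rw [hu, Sym2.mem_iff] at hze
          rcases hze with rfl | rfl
          · exact absurd hzf (hvun f hfM)
          · rfl
        have hy : y = u := by
          rw [hu, Sym2.mem_iff] at hye
          rcases hye with rfl | rfl
          · exact absurd hyg (hvun g hgM)
          · rfl
        by_contra hne'
        exact hM.1.2 f hfM g hgM hne' u (hz ▸ hzf) (hy ▸ hyg)
      exact le_trans (min_le_left _ _) (by omega)
    · have hcov : ∀ f ∈ Rstar \ M, ∀ v, v ∈ f → ∃ g ∈ M \ Rstar, v ∈ g := by
        intro f hfRM v hvf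
        obtain ⟨u, hu⟩ := Sym2.mem_iff_exists.mp hvf
        rw [Finset.mem_sdiff] at hfRM
        have hvu : v ≠ u := (G.mem_edgeSet.mp (hu ▸ (hRm.1 f hfRM.1))).ne
        have hAdju : (sdGraph M Rstar).Adj v u :=
          ⟨hvu, Finset.mem_union_right _ (Finset.mem_sdiff.mpr ⟨hu ▸ hfRM.1, hu ▸ hfRM.2⟩)⟩
        have hnotU : ¬ ∃! w : V, (sdGraph M Rstar).Adj v w := by
          intro hU
          exact hD ⟨f, ⟨Finset.mem_sdiff.mpr hfRM, v, hvf, hU⟩⟩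
        have hsecond : ∃ w : V, (sdGraph M Rstar).Adj v w ∧ w ≠ u := by
          by_contra hno
          push_neg at hno
          exact hnotU ⟨u, hAdju, fun y hy => hno y hy⟩
        obtain ⟨w, hAdjw, hwu⟩ := hsecond
        rcases Finset.mem_union.mp hAdjw.2 with hMR | hRM2
        · exact ⟨s(v, w), hMR, Sym2.mem_mk_left _ _⟩
        · exfalso
          rw [Finset.mem_sdiff] at hRM2
          have hvwf : s(v, w) ≠ f := by
            intro h
            rw [hu] at h
            rcases Sym2.eq_iff.mp h with ⟨-, h2⟩ | ⟨h1, -⟩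
            · exact hwu h2
            · exact hvu h1
          exact hRm.2 f hfRM.1 (s(v, w)) hRM2.1 (Ne.symm hvwf) v hvf (Sym2.mem_mk_left _ _)
      have hdisjR : ∀ f ∈ Rstar \ M, ∀ g ∈ Rstar \ M, f ≠ g →
          Disjoint (Finset.univ.filter (fun v => v ∈ f)) (Finset.univ.filter (fun v => v ∈ g)) := by
        intro f hf g hg hfg
        rw [Finset.disjoint_left]
        intro v hvf hvg
        exact hRm.2 f (Finset.mem_sdiff.mp hf).1 g (Finset.mem_sdiff.mp hg).1 hfg v
          (Finset.mem_filter.mp hvf).2 (Finset.mem_filter.mp hvg).2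
      have hdisjM : ∀ f ∈ M \ Rstar, ∀ g ∈ M \ Rstar, f ≠ g →
          Disjoint (Finset.univ.filter (fun v => v ∈ f)) (Finset.univ.filter (fun v => v ∈ g)) := by
        intro f hf g hg hfg
        rw [Finset.disjoint_left]
        intro v hvf hvg
        exact hM.1.2 f (Finset.mem_sdiff.mp hf).1 g (Finset.mem_sdiff.mp hg).1 hfg v
          (Finset.mem_filter.mp hvf).2 (Finset.mem_filter.mp hvg).2
      have hA : ((Rstar \ M).biUnion fun f => Finset.univ.filter (fun v => v ∈ f)).card
          = 2 * (Rstar \ M).card := by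
        rw [Finset.card_biUnion hdisjR,
          Finset.sum_congr rfl (fun f hf => ends (hRm.1 f (Finset.mem_sdiff.mp hf).1)),
          Finset.sum_const, smul_eq_mul, mul_comm]
      have hB : ((M \ Rstar).biUnion fun f => Finset.univ.filter (fun v => v ∈ f)).card
          = 2 * (M \ Rstar).card := by
        rw [Finset.card_biUnion hdisjM,
          Finset.sum_congr rfl (fun f hf => ends (hM.1.1 f (Finset.mem_sdiff.mp hf).1)),
          Finset.sum_const, smul_eq_mul, mul_comm]
      have hsubAB : ((Rstar \ M).biUnion fun f => Finset.univ.filter (fun v => v ∈ f)) ⊆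
          ((M \ Rstar).biUnion fun f => Finset.univ.filter (fun v => v ∈ f)) := by
        intro v hv
        obtain ⟨f, hf, hvf⟩ := Finset.mem_biUnion.mp hv
        obtain ⟨g, hg, hvg⟩ := hcov f hf v (Finset.mem_filter.mp hvf).2
        exact Finset.mem_biUnion.mpr ⟨g, hg, Finset.mem_filter.mpr ⟨Finset.mem_univ _, hvg⟩⟩
      have hABcard := Finset.card_le_card hsubAB
      have hRleM : Rstar.card ≤ M.card := by
        have h1 := Finset.card_sdiff_add_card_inter Rstar M
        have h2 := Finset.card_sdiff_add_card_inter M Rstar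
        have h3 : (Rstar ∩ M).card = (M ∩ Rstar).card := by rw [Finset.inter_comm]
        omega
      exact le_trans (min_le_right _ _) (by omega)
  refine ⟨fun M hM hne => ⟨(key M hM hne).1, (key M hM hne).2.1⟩, ?_⟩
  have main : ∀ n : ℕ, ∀ M : Finset (Sym2 V), IsMaximalMatchingF G M →
      Rstar.card - (M ∩ Rstar).card ≤ n → ∃ k : ℕ, par^[k] M = Rstar := by
    intro n
    induction n with
    | zero =>
      intro M hM h0
      have hsub : M ∩ Rstar ⊆ Rstar := Finset.inter_subset_right
      have hcard := Finset.card_le_card hsub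
      have heq : M ∩ Rstar = Rstar := Finset.eq_of_subset_of_card_le hsub (by omega)
      have hRsubM : Rstar ⊆ M := by
        intro x hx
        rw [← heq] at hx
        exact (Finset.mem_inter.mp hx).1
      exact ⟨0, (Finset.eq_of_subset_of_card_le hRsubM (hRmax M hM.1)).symm⟩
    | succ n ih =>
      intro M hM hle
      by_cases hne : M = Rstar
      · exact ⟨0, hne⟩
      · obtain ⟨hlt, -, hmax'⟩ := key M hM hne
        have hb : (par M ∩ Rstar).card ≤ Rstar.card :=
          Finset.card_le_card Finset.inter_subset_right
        obtain ⟨k, hk⟩ := ih (par M) hmax' (by omega)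
        exact ⟨k + 1, by rw [Function.iterate_succ_apply, hk]⟩
  exact fun M hM => main _ M hM le_rfl
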